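/- arXiv:0804.0942 — 4 statements merged into one kernel-verified Lean document; each statement's English description precedes it below -/
import Mathlib

section
/- Let p, q, r be affinely independent points in the Euclidean plane ℝ², and suppose the angle ∠pqr is non-obtuse, i.e., ⟪p−q, r−q⟫ ≥ 0. Let τ, τ′ : ℝ² → ℝ be affine maps that agree on the line through q and r, with τ(p) ≤ τ(q) ≤ τ(r). Let S > 0 and 0 < ε < 1 be reals such that |τ(r) − τ(q)| ≤ (1−ε)·S·‖r−q‖ and ‖∇τ‖ < S. If τ(p) ≤ τ′(p) ≤ τ(p) + ε·S·d, where d is the distance from p to the line through q and r, then ‖∇τ′‖ < S. -/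
/-- The norm of the (constant) gradient of an affine map `ℝ² → ℝ`,
i.e. the operator norm of its linear part. -/
noncomputable def gradNorm (τ : EuclideanSpace ℝ (Fin 2) →ᵃ[ℝ] ℝ) : ℝ :=
  ‖LinearMap.toContinuousLinearMap τ.linear‖

/-!
Write gradients in the orthonormal frame `(u, n)` with `u` along the edge `qr` and `n` the unit
normal towards `p`, so that `p - q = c u + d n` with `c ≥ 0` (the angle at `q` is non-obtuse) and
`d` the distance from `p` to the line `qr`. Both maps have the same edge component
`t = (τ r - τ q) / ‖r - q‖ ∈ [0, (1 - ε) S]`. The normal component `a` of `∇τ` is `≤ 0` because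
`τ p ≤ τ q`, and lifting `p` by `δ ∈ [0, ε S d]` moves it to `a' = a + δ / d ∈ [a, a + ε S]`.
If `a' ≤ 0` then `a'² ≤ a²`; otherwise `a' ≤ ε S` and `t² + a'² ≤ ((1 - ε)² + ε²) S² < S²`.
-/

open Module RealInnerProductSpace

section AffineFunctional

variable {k V : Type*} [Ring k] [AddCommGroup V] [Module k V] (f : V →ᵃ[k] k) {x y u n : V}

theorem AffineMap.apply_sub_apply_of_sub_eq_smul {a : k} (h : x - y = a • u) :
    f x - f y = a * f.linear u := by
  rw [← smul_eq_mul, ← map_smul, ← h]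
  exact (f.linearMap_vsub x y).symm

theorem AffineMap.apply_sub_apply_of_sub_eq_smul_add {a b : k} (h : x - y = a • u + b • n) :
    f x - f y = a * f.linear u + b * f.linear n := by
  rw [← smul_eq_mul, ← smul_eq_mul, ← map_smul, ← map_smul, ← map_add, ← h]
  exact (f.linearMap_vsub x y).symm

end AffineFunctional

section InnerProductSpace

variable {E : Type*} [NormedAddCommGroup E] [InnerProductSpace ℝ E]

theorem OrthonormalBasis.sum_sq_apply_eq_sq_norm {ι : Type*} [Fintype ι]
    (b : OrthonormalBasis ι ℝ E) (g : E →L[ℝ] ℝ) : ∑ i, g (b i) ^ 2 = ‖g‖ ^ 2 := by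
  have : FiniteDimensional ℝ E := .of_basis b.toBasis
  rw [← (InnerProductSpace.toDual ℝ E).symm.norm_map g, ← b.sum_sq_inner_left]
  simp only [InnerProductSpace.toDual_symm_apply]

theorem Orthonormal.sq_apply_add_sq_apply_eq_sq_norm (hE : finrank ℝ E = 2) {u n : E}
    (hun : Orthonormal ℝ ![u, n]) (g : E →L[ℝ] ℝ) : g u ^ 2 + g n ^ 2 = ‖g‖ ^ 2 := by
  have : FiniteDimensional ℝ E := .of_finrank_pos (by omega)
  have hspan := hun.linearIndependent.span_eq_top_of_card_eq_finrank' (by simp [hE])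
  simpa using (OrthonormalBasis.mk hun hspan.ge).sum_sq_apply_eq_sq_norm g

theorem exists_orthonormal_pair_eq_inner_smul_add {u x : E} (hu : ‖u‖ = 1) (hx : x ∉ ℝ ∙ u) :
    ∃ (n : E) (d : ℝ), Orthonormal ℝ ![u, n] ∧ 0 < d ∧ x = ⟪u, x⟫ • u + d • n := by
  set w := x - ⟪u, x⟫ • u with hw_def
  have hw : w ≠ 0 := fun h => hx (Submodule.mem_span_singleton.2 ⟨_, (sub_eq_zero.1 h).symm⟩)
  have huw : ⟪u, w⟫ = 0 := by
    rw [inner_sub_right, real_inner_smul_right, real_inner_self_eq_norm_sq, hu]; ring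
  refine ⟨‖w‖⁻¹ • w, ‖w‖, ?_, norm_pos_iff.2 hw, ?_⟩
  · simp [orthonormal_vecCons_iff, hu, norm_smul, real_inner_smul_right, huw, hw]
  · rw [smul_smul, mul_inv_cancel₀ (norm_ne_zero_iff.2 hw), one_smul, hw_def]; abel

theorem exists_orthonormal_frame_of_notMem_line {p q r : E} (hqr : q ≠ r)
    (hp : p ∉ line[ℝ, q, r]) :
    ∃ (u n : E) (d : ℝ), r - q = ‖r - q‖ • u ∧ Orthonormal ℝ ![u, n] ∧ 0 < d ∧
      p - q = ⟪u, p - q⟫ • u + d • n ∧ Metric.infDist p line[ℝ, q, r] ≤ d := by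
  have hrq : r - q ≠ 0 := sub_ne_zero.2 hqr.symm
  obtain ⟨u, hu_def⟩ : ∃ u : E, u = ‖r - q‖⁻¹ • (r - q) := ⟨_, rfl⟩
  have hu : ‖u‖ = 1 := hu_def ▸ norm_smul_inv_norm hrq
  have hru : r - q = ‖r - q‖ • u := by
    rw [hu_def, smul_smul, mul_inv_cancel₀ (norm_ne_zero_iff.2 hrq), one_smul]
  have hline (c : ℝ) : c • u + q ∈ line[ℝ, q, r] := by
    simpa [hu_def, smul_smul] using smul_vsub_vadd_mem_affineSpan_pair (c * ‖r - q‖⁻¹) q r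
  have hpq : p - q ∉ ℝ ∙ u := fun h => by
    obtain ⟨c, hc⟩ := Submodule.mem_span_singleton.1 h
    exact hp (by simpa [hc] using hline c)
  obtain ⟨n, d, hun, hd, hpq_eq⟩ := exists_orthonormal_pair_eq_inner_smul_add hu hpq
  refine ⟨u, n, d, hru, hun, hd, hpq_eq, ?_⟩
  calc Metric.infDist p line[ℝ, q, r] ≤ dist p (⟪u, p - q⟫ • u + q) :=
        Metric.infDist_le_dist_of_mem (hline _)
    _ = d := by
        rw [dist_eq_norm, sub_add_eq_sub_sub, sub_right_comm]
        nth_rw 1 [hpq_eq]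
        rw [add_sub_cancel_left, norm_smul, Real.norm_of_nonneg hd.le,
          show ‖n‖ = 1 from hun.norm_eq_one 1, mul_one]

theorem norm_lt_of_normal_shift (hE : finrank ℝ E = 2) {u n : E} (hun : Orthonormal ℝ ![u, n])
    {g g' : E →L[ℝ] ℝ} {S ε : ℝ} (hε0 : 0 < ε) (hε1 : ε < 1) (hg : ‖g‖ < S)
    (hu : g' u = g u) (hu0 : 0 ≤ g u) (hu1 : g u ≤ (1 - ε) * S)
    (hn0 : g n ≤ 0) (hn1 : g n ≤ g' n) (hn2 : g' n ≤ g n + ε * S) : ‖g'‖ < S := by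
  have hS : 0 < S := (norm_nonneg g).trans_lt hg
  have hgS : g u ^ 2 + g n ^ 2 < S ^ 2 := by
    rw [hun.sq_apply_add_sq_apply_eq_sq_norm hE]; gcongr
  suffices g u ^ 2 + g' n ^ 2 < S ^ 2 by
    rw [← hu, hun.sq_apply_add_sq_apply_eq_sq_norm hE] at this
    exact lt_of_pow_lt_pow_left₀ 2 hS.le this
  rcases le_or_gt (g' n) 0 with h | h
  · nlinarith
  · nlinarith [mul_pos (mul_pos hε0 (sub_pos.2 hε1)) (mul_pos hS hS)]

end InnerProductSpace

theorem stmt_2_general (p q r : EuclideanSpace ℝ (Fin 2))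
    (hind : AffineIndependent ℝ ![p, q, r])
    (hangle : 0 ≤ (inner ℝ (p - q) (r - q) : ℝ))
    (τ τ' : EuclideanSpace ℝ (Fin 2) →ᵃ[ℝ] ℝ)
    (hagree : ∀ x ∈ affineSpan ℝ ({q, r} : Set (EuclideanSpace ℝ (Fin 2))), τ x = τ' x)
    (hpq : τ p ≤ τ q) (hqr : τ q ≤ τ r)
    (S ε : ℝ) (hε0 : 0 < ε) (hε1 : ε < 1)
    (hedge : |τ r - τ q| ≤ (1 - ε) * S * ‖r - q‖)
    (hcausal : gradNorm τ < S)
    (hlift1 : τ p ≤ τ' p)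
    (hlift2 : τ' p ≤ τ p +
      ε * S * Metric.infDist p (affineSpan ℝ ({q, r} : Set (EuclideanSpace ℝ (Fin 2))) : Set _)) :
    gradNorm τ' < S := by
  have hq_ne_r : q ≠ r := by simpa using hind.injective.ne (show (1 : Fin 3) ≠ 2 by decide)
  have hp : p ∉ line[ℝ, q, r] := fun hp =>
    affineIndependent_iff_not_collinear_set.1 hind (collinear_insert_of_mem_affineSpan_pair hp)
  obtain ⟨u, n, d, hru, hun, hd, hpq_eq, hdist⟩ :=
    exists_orthonormal_frame_of_notMem_line hq_ne_r hp
  have hrq : 0 < ‖r - q‖ := norm_pos_iff.2 (sub_ne_zero.2 hq_ne_r.symm)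
  have hq' := hagree q (left_mem_affineSpan_pair ℝ q r)
  have hr' := hagree r (right_mem_affineSpan_pair ℝ q r)
  have hτ'u : τ'.linear u = τ.linear u := by
    have := τ'.apply_sub_apply_of_sub_eq_smul hru
    rw [← hq', ← hr', τ.apply_sub_apply_of_sub_eq_smul hru] at this
    exact (mul_left_cancel₀ hrq.ne' this).symm
  have hc : 0 ≤ ⟪u, p - q⟫ := by
    rw [hru, real_inner_smul_right, real_inner_comm] at hangle
    exact nonneg_of_mul_nonneg_right hangle hrq
  have ht0 : 0 ≤ τ.linear u := by
    rw [← sub_nonneg, τ.apply_sub_apply_of_sub_eq_smul hru] at hqr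
    exact nonneg_of_mul_nonneg_right hqr hrq
  have ht1 : τ.linear u ≤ (1 - ε) * S := by
    have := (le_abs_self _).trans hedge
    rw [τ.apply_sub_apply_of_sub_eq_smul hru, mul_comm] at this
    exact le_of_mul_le_mul_right this hrq
  have hτp := τ.apply_sub_apply_of_sub_eq_smul_add hpq_eq
  have hτ'p := τ'.apply_sub_apply_of_sub_eq_smul_add hpq_eq
  rw [← hq', hτ'u] at hτ'p
  have hS : 0 < S := (norm_nonneg _).trans_lt hcausal
  refine norm_lt_of_normal_shift finrank_euclideanSpace_fin hun hε0 hε1 hcausal hτ'u ht0 ht1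
    ?_ ?_ ?_ <;> simp only [LinearMap.coe_toContinuousLinearMap']
  · nlinarith [mul_nonneg hc ht0]
  · nlinarith
  · nlinarith [mul_le_mul_of_nonneg_left hdist (by positivity : 0 ≤ ε * S)]

theorem stmt_2 (p q r : EuclideanSpace ℝ (Fin 2))
    (hind : AffineIndependent ℝ ![p, q, r])
    (hangle : 0 ≤ (inner ℝ (p - q) (r - q) : ℝ))
    (τ τ' : EuclideanSpace ℝ (Fin 2) →ᵃ[ℝ] ℝ)
    (hagree : ∀ x ∈ affineSpan ℝ ({q, r} : Set (EuclideanSpace ℝ (Fin 2))), τ x = τ' x)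
    (hpq : τ p ≤ τ q) (hqr : τ q ≤ τ r)
    (S ε : ℝ) (hS : 0 < S) (hε0 : 0 < ε) (hε1 : ε < 1)
    (hedge : |τ r - τ q| ≤ (1 - ε) * S * ‖r - q‖)
    (hcausal : gradNorm τ < S)
    (hlift1 : τ p ≤ τ' p)
    (hlift2 : τ' p ≤ τ p +
      ε * S * Metric.infDist p (affineSpan ℝ ({q, r} : Set (EuclideanSpace ℝ (Fin 2))) : Set _)) :
    gradNorm τ' < S :=
  stmt_2_general p q r hind hangle τ τ' hagree hpq hqr S ε hε0 hε1 hedge hcausal hlift1 hlift2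
end

section
/- Let p, q, r be affinely independent points in the Euclidean plane ℝ², and suppose the angle θ = ∠pqr is obtuse, i.e., ⟪p−q, r−q⟫ < 0. Let τ, τ′ : ℝ² → ℝ be affine maps that agree on the line through q and r, with τ(p) ≤ τ(q) ≤ τ(r). Let S > 0 and 0 < ε < 1 be reals such that |τ(r) − τ(q)| ≤ (1−ε)·S·(sin θ)·‖r−q‖ and ‖∇τ‖ < S. If τ(p) ≤ τ′(p) ≤ τ(p) + ε·S·d, where d is the distance from p to the line through q and r, then ‖∇τ′‖ < S. -/
open InnerProductGeometry Real

theorem AffineMap.linear_sub {k V W : Type*} [Ring k] [AddCommGroup V] [Module k V]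
    [AddCommGroup W] [Module k W] (f : V →ᵃ[k] W) (x y : V) :
    f.linear (x - y) = f x - f y :=
  f.linearMap_vsub x y

theorem AffineMap.apply_sub_apply_of_sub_eq {k V W : Type*} [CommRing k] [AddCommGroup V]
    [Module k V] [AddCommGroup W] [Module k W] (f : V →ᵃ[k] W) {p q u n : V} {t d : k}
    (hpq : p - q = t • u + d • n) : f p - f q = t • f.linear u + d • f.linear n := by
  rw [← f.linear_sub, hpq, map_add, map_smul, map_smul]

theorem AffineMap.linear_le_linear_of_lift {V : Type*} [AddCommGroup V] [Module ℝ V]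
    {p q u n : V} {t d δ : ℝ} (hd : 0 < d) (hpq : p - q = t • u + d • n) {τ τ' : V →ᵃ[ℝ] ℝ}
    (hq : τ q = τ' q) (hu : τ'.linear u = τ.linear u) (h1 : τ p ≤ τ' p)
    (h2 : τ' p ≤ τ p + δ * d) : τ.linear n ≤ τ'.linear n ∧ τ'.linear n ≤ τ.linear n + δ := by
  have hlift : τ' p - τ p = d * (τ'.linear n - τ.linear n) := by
    linear_combination τ'.apply_sub_apply_of_sub_eq hpq - τ.apply_sub_apply_of_sub_eq hpq - hq
      + t * hu
  constructor
  · exact sub_nonneg.1 (nonneg_of_mul_nonneg_right (hlift ▸ sub_nonneg.2 h1) hd)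
  · have : d * (τ'.linear n - τ.linear n) ≤ d * δ := by linarith
    linarith [le_of_mul_le_mul_left this hd]

theorem AffineSubspace.infDist_le_norm_sub_sub {k E : Type*} [Ring k]
    [SeminormedAddCommGroup E] [Module k E] {L : AffineSubspace k E} {q x : E} (hq : q ∈ L)
    (hx : x ∈ L.direction) (p : E) : Metric.infDist p L ≤ ‖p - q - x‖ := by
  refine (Metric.infDist_le_dist_of_mem (L.vadd_mem_of_mem_direction hx hq)).trans_eq ?_
  rw [dist_eq_norm, vadd_eq_add, sub_add_eq_sub_sub_swap]

theorem OrthonormalBasis.norm_sq_eq_sum_sq_apply {ι E : Type*} [Fintype ι]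
    [NormedAddCommGroup E] [InnerProductSpace ℝ E] (b : OrthonormalBasis ι ℝ E)
    (f : StrongDual ℝ E) : ‖f‖ ^ 2 = ∑ i, f (b i) ^ 2 := by
  have : FiniteDimensional ℝ E := .of_basis b.toBasis
  have := FiniteDimensional.complete ℝ E
  rw [← (InnerProductSpace.toDual ℝ E).symm.norm_map f, ← b.sum_sq_inner_left]
  simp_rw [InnerProductSpace.toDual_symm_apply]

theorem gradNorm_sq_eq {u n : EuclideanSpace ℝ (Fin 2)} (hu : ‖u‖ = 1) (hn : ‖n‖ = 1)
    (hun : inner ℝ u n = 0) (f : EuclideanSpace ℝ (Fin 2) →ᵃ[ℝ] ℝ) :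
    gradNorm f ^ 2 = f.linear u ^ 2 + f.linear n ^ 2 := by
  have hon : Orthonormal ℝ ![u, n] := by
    rw [orthonormal_iff_ite]
    intro i j
    fin_cases i <;> fin_cases j <;> simp [hu, hn, hun, real_inner_comm u n]
  obtain ⟨b, hb⟩ : ∃ b : OrthonormalBasis (Fin 2) ℝ (EuclideanSpace ℝ (Fin 2)), ⇑b = ![u, n] :=
    ⟨_, OrthonormalBasis.coe_mk hon
      (hon.linearIndependent.span_eq_top_of_card_eq_finrank (by simp)).ge⟩
  rw [gradNorm, b.norm_sq_eq_sum_sq_apply, Fin.sum_univ_two, hb]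
  simp

theorem sin_angle_sub_pos_of_affineIndependent {V : Type*} [NormedAddCommGroup V]
    [InnerProductSpace ℝ V] {p q r : V} (h : AffineIndependent ℝ ![p, q, r]) :
    0 < sin (angle (p - q) (r - q)) := by
  have := EuclideanGeometry.sin_pos_of_not_collinear (affineIndependent_iff_not_collinear_set.mp h)
  rwa [EuclideanGeometry.angle, vsub_eq_sub, vsub_eq_sub] at this

theorem exists_orthonormal_eq_smul_add_smul {V : Type*} [NormedAddCommGroup V]
    [InnerProductSpace ℝ V] {v w : V} (hv : v ≠ 0) (hw : w ≠ 0) (hθ : sin (angle w v) ≠ 0) :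
    ∃ u n : V, ‖u‖ = 1 ∧ ‖n‖ = 1 ∧ inner ℝ u n = 0 ∧ u = ‖v‖⁻¹ • v ∧
      w = (‖w‖ * cos (angle w v)) • u + (‖w‖ * sin (angle w v)) • n := by
  set u := ‖v‖⁻¹ • v
  have hu : ‖u‖ = 1 := norm_smul_inv_norm hv
  rw [← angle_smul_right_of_pos w v (inv_pos.2 (norm_pos_iff.2 hv))] at hθ ⊢
  set m := w - (‖w‖ * cos (angle w u)) • u
  have hwu : inner ℝ u w = ‖w‖ * cos (angle w u) := by
    rw [real_inner_comm, ← cos_angle_mul_norm_mul_norm, hu]; ring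
  have hum : inner ℝ u m = 0 := by
    simp [m, inner_sub_right, real_inner_smul_right, hwu, hu]
  have hm : ‖m‖ = ‖w‖ * sin (angle w u) := by
    have hsq : ‖m‖ ^ 2 = (‖w‖ * sin (angle w u)) ^ 2 := by
      rw [norm_sub_sq_real, real_inner_smul_right, real_inner_comm, hwu, norm_smul, hu,
        Real.norm_eq_abs]
      nlinarith [sin_sq_add_cos_sq (angle w u), sq_abs (‖w‖ * cos (angle w u))]
    exact (pow_left_inj₀ (norm_nonneg _) (mul_nonneg (norm_nonneg _) (sin_angle_nonneg _ _))
      two_ne_zero).1 hsq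
  have hm0 : ‖m‖ ≠ 0 := by rw [hm]; exact mul_ne_zero (norm_ne_zero_iff.2 hw) hθ
  refine ⟨u, ‖m‖⁻¹ • m, hu, norm_smul_inv_norm (norm_ne_zero_iff.1 hm0), ?_, rfl, ?_⟩
  · rw [real_inner_smul_right, hum, mul_zero]
  · rw [← hm, smul_inv_smul₀ hm0, add_sub_cancel]

theorem infDist_affineSpan_pair_le {V : Type*} [NormedAddCommGroup V] [InnerProductSpace ℝ V]
    {p q r : V} (hrq : r - q ≠ 0) (hpq : p - q ≠ 0) (hθ : sin (angle (p - q) (r - q)) ≠ 0) :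
    Metric.infDist p (line[ℝ, q, r] : Set V) ≤ ‖p - q‖ * sin (angle (p - q) (r - q)) := by
  obtain ⟨u, n, -, hn, -, hu_def, hpq_eq⟩ := exists_orthonormal_eq_smul_add_smul hrq hpq hθ
  have hu_dir : u ∈ (line[ℝ, q, r]).direction := by
    rw [direction_affineSpan, hu_def]
    exact Submodule.smul_mem _ _ (vsub_rev_mem_vectorSpan_pair ℝ q r)
  have hfoot := (line[ℝ, q, r]).infDist_le_norm_sub_sub (left_mem_affineSpan_pair ℝ q r)
    (Submodule.smul_mem _ (‖p - q‖ * cos (angle (p - q) (r - q))) hu_dir) p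
  rwa [sub_eq_iff_eq_add'.2 hpq_eq, norm_smul, hn, mul_one,
    Real.norm_of_nonneg (mul_nonneg (norm_nonneg _) (sin_angle_nonneg _ _))] at hfoot

theorem sq_add_sq_lt_sq_of_lift {a b₀ b s c S ε : ℝ} (hsc : s ^ 2 + c ^ 2 = 1) (hs : 0 < s)
    (hc : c ≤ 0) (hS : 0 < S) (hε0 : 0 < ε) (hε1 : ε < 1) (ha0 : 0 ≤ a)
    (ha : a ≤ (1 - ε) * S * s) (hab₀ : c * a + s * b₀ ≤ 0) (hab₀S : a ^ 2 + b₀ ^ 2 < S ^ 2)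
    (hb₀b : b₀ ≤ b) (hbb₀ : b ≤ b₀ + ε * S) : a ^ 2 + b ^ 2 < S ^ 2 := by
  rcases le_or_gt b 0 with hb | hb
  · nlinarith
  have hb₀ : b₀ ≤ (1 - ε) * S * -c := le_of_mul_le_mul_left (by nlinarith) hs
  have hc1 : 0 < 1 + c := by nlinarith
  calc a ^ 2 + b ^ 2 ≤ ((1 - ε) * S * s) ^ 2 + ((1 - ε) * S * -c + ε * S) ^ 2 := by
        gcongr; linarith
    _ = S ^ 2 - 2 * ε * (1 - ε) * (1 + c) * S ^ 2 := by
        linear_combination ((1 - ε) * S) ^ 2 * hsc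
    _ < S ^ 2 := by
        have : 0 < ε * (1 - ε) * (1 + c) * S ^ 2 := by
          have : 0 < 1 - ε := by linarith
          positivity
        linarith

theorem gradNorm_lt_of_lift {u n : EuclideanSpace ℝ (Fin 2)} (hu : ‖u‖ = 1) (hn : ‖n‖ = 1)
    (hun : inner ℝ u n = 0) {s c S ε : ℝ} (hsc : s ^ 2 + c ^ 2 = 1) (hs : 0 < s) (hc : c ≤ 0)
    (hS : 0 < S) (hε0 : 0 < ε) (hε1 : ε < 1) {τ τ' : EuclideanSpace ℝ (Fin 2) →ᵃ[ℝ] ℝ}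
    (hτ'u : τ'.linear u = τ.linear u) (ha0 : 0 ≤ τ.linear u)
    (ha : τ.linear u ≤ (1 - ε) * S * s) (hp : c * τ.linear u + s * τ.linear n ≤ 0)
    (hcausal : gradNorm τ < S) (hb₀b : τ.linear n ≤ τ'.linear n)
    (hbb₀ : τ'.linear n ≤ τ.linear n + ε * S) : gradNorm τ' < S := by
  refine lt_of_pow_lt_pow_left₀ 2 hS.le ?_
  rw [gradNorm_sq_eq hu hn hun, hτ'u]
  refine sq_add_sq_lt_sq_of_lift hsc hs hc hS hε0 hε1 ha0 ha hp ?_ hb₀b hbb₀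
  rw [← gradNorm_sq_eq hu hn hun]
  exact pow_lt_pow_left₀ hcausal (norm_nonneg _) two_ne_zero

theorem stmt_3 (p q r : EuclideanSpace ℝ (Fin 2))
    (hind : AffineIndependent ℝ ![p, q, r])
    (hangle : (inner ℝ (p - q) (r - q) : ℝ) < 0)
    (τ τ' : EuclideanSpace ℝ (Fin 2) →ᵃ[ℝ] ℝ)
    (hagree : ∀ x ∈ affineSpan ℝ ({q, r} : Set (EuclideanSpace ℝ (Fin 2))), τ x = τ' x)
    (hpq : τ p ≤ τ q) (hqr : τ q ≤ τ r)
    (S ε : ℝ) (hS : 0 < S) (hε0 : 0 < ε) (hε1 : ε < 1)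
    (hedge : |τ r - τ q| ≤
      (1 - ε) * S * Real.sin (InnerProductGeometry.angle (p - q) (r - q)) * ‖r - q‖)
    (hcausal : gradNorm τ < S)
    (hlift1 : τ p ≤ τ' p)
    (hlift2 : τ' p ≤ τ p +
      ε * S * Metric.infDist p (affineSpan ℝ ({q, r} : Set (EuclideanSpace ℝ (Fin 2))) : Set _)) :
    gradNorm τ' < S := by
  have hqL := left_mem_affineSpan_pair ℝ q r
  have hrq : r - q ≠ 0 := by rintro h; simp [h] at hangle
  have hpq0 : p - q ≠ 0 := by rintro h; simp [h] at hangle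
  have hs := sin_angle_sub_pos_of_affineIndependent hind
  have hc : cos (angle (p - q) (r - q)) ≤ 0 := by
    rw [cos_angle]; exact (div_neg_of_neg_of_pos hangle (by positivity)).le
  obtain ⟨u, n, hu, hn, hun, hu_def, hpq_eq⟩ := exists_orthonormal_eq_smul_add_smul hrq hpq0 hs.ne'
  have hd := mul_pos (norm_pos_iff.2 hpq0) hs
  have hslope (f : EuclideanSpace ℝ (Fin 2) →ᵃ[ℝ] ℝ) : f.linear u = ‖r - q‖⁻¹ * (f r - f q) := by
    rw [hu_def, map_smul, f.linear_sub, smul_eq_mul]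
  have hτ'u : τ'.linear u = τ.linear u := by
    rw [hslope, hslope, hagree q hqL, hagree r (right_mem_affineSpan_pair ℝ q r)]
  have hdist := infDist_affineSpan_pair_le hrq hpq0 hs.ne'
  obtain ⟨hb₀b, hbb₀⟩ := AffineMap.linear_le_linear_of_lift (δ := ε * S) hd hpq_eq
    (hagree q hqL) hτ'u hlift1 (hlift2.trans (by gcongr))
  refine gradNorm_lt_of_lift hu hn hun (sin_sq_add_cos_sq _) hs hc hS hε0 hε1 hτ'u ?_ ?_ ?_
    hcausal hb₀b hbb₀
  · rw [hslope]; exact mul_nonneg (by positivity) (sub_nonneg.2 hqr)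
  · rw [hslope, inv_mul_le_iff₀ (norm_pos_iff.2 hrq)]
    linarith [(le_abs_self _).trans hedge]
  · have hτp := τ.apply_sub_apply_of_sub_eq hpq_eq
    simp only [smul_eq_mul] at hτp
    refine nonpos_of_mul_nonpos_right ?_ (norm_pos_iff.2 hpq0)
    linarith
end

section
/- Let p, q, r be affinely independent points in ℝ², let u = (p+r)/2, and let ε, φ be reals with 0 < ε < φ < (1+ε)/2. For an ordered triple (a,b,c) of affinely independent points define dw(a,b,c) := min{ (1−ε)·dist(a, aff{b,c}), (1−φ)·dist(b, aff{a,c}), (1−φ)·dist(c, aff{a,b}) }. Then dw(q,r,p) > dw(u,p,q). -/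
/-- The "diminished width" of triangle `abc` with apex `a`. -/
noncomputable def dw (ε φ : ℝ) (a b c : EuclideanSpace ℝ (Fin 2)) : ℝ :=
  min ((1 - ε) * Metric.infDist a (affineSpan ℝ ({b, c} : Set (EuclideanSpace ℝ (Fin 2))) : Set _))
    (min ((1 - φ) * Metric.infDist b (affineSpan ℝ ({a, c} : Set (EuclideanSpace ℝ (Fin 2))) : Set _))
         ((1 - φ) * Metric.infDist c (affineSpan ℝ ({a, b} : Set (EuclideanSpace ℝ (Fin 2))) : Set _)))

/-!
Every altitude of `pqr` times its base is twice the area `A` of `pqr` (the square root of a Gram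
determinant of two sides), and `puq` has area `A / 2`. Since `u` lies on `pr`, the altitudes from
`q` in the two triangles coincide, and `ε < φ` compares the terms built on them; the altitude of
`upq` from `u` is half that of `pqr` from `r`, and `φ < (1 + ε) / 2` compares those. For the
altitude of `pqr` from `p`, the strict median inequality `|qr| < max (2 |qu|) |rp|` (Apollonius)
shows that it exceeds the smaller of the altitudes from `p` in `puq` and from `q` in `pqr`.
-/

open Metric RealInnerProductSpace

section Triangle

variable {V : Type*} [NormedAddCommGroup V] [InnerProductSpace ℝ V]

def gramDet (v w : V) : ℝ := ‖v‖ ^ 2 * ‖w‖ ^ 2 - ⟪v, w⟫ ^ 2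

lemma gramDet_smul_left (t : ℝ) (v w : V) : gramDet (t • v) w = t ^ 2 * gramDet v w := by
  simp only [gramDet, norm_smul, real_inner_smul_left, Real.norm_eq_abs, mul_pow, sq_abs]
  ring

lemma gramDet_sub_sub_rotate (x y z : V) :
    gramDet (x - y) (z - y) = gramDet (y - z) (x - z) := by
  simp only [gramDet, ← real_inner_self_eq_norm_sq, inner_sub_left, inner_sub_right,
    real_inner_comm x y, real_inner_comm x z, real_inner_comm y z]
  ring

lemma norm_sub_smul_mul_norm (y v : V) (t : ℝ) :
    ‖y - t • v‖ * ‖v‖ = √(gramDet y v + (t * ‖v‖ ^ 2 - ⟪y, v⟫) ^ 2) := by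
  rw [← Real.sqrt_sq (by positivity : 0 ≤ ‖y - t • v‖ * ‖v‖)]
  congr 1
  rw [gramDet, mul_pow, norm_sub_sq_real, norm_smul, real_inner_smul_right, Real.norm_eq_abs,
    mul_pow, sq_abs]
  ring

lemma infDist_affineSpan_pair_mul_dist (x a b : V) :
    infDist x line[ℝ, a, b] * dist a b = √(gramDet (x - a) (b - a)) := by
  rcases eq_or_ne a b with rfl | hab
  · simp [gramDet]
  have hv : 0 < ‖b - a‖ := norm_pos_iff.2 (sub_ne_zero.2 hab.symm)
  have hdist (t : ℝ) : dist x (AffineMap.lineMap a b t) * dist a b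
      = √(gramDet (x - a) (b - a) + (t * ‖b - a‖ ^ 2 - ⟪x - a, b - a⟫) ^ 2) := by
    rw [← norm_sub_smul_mul_norm, AffineMap.lineMap_apply, dist_eq_norm, dist_comm, dist_eq_norm,
      vsub_eq_sub, vadd_eq_add, sub_add_eq_sub_sub_swap]
  apply le_antisymm
  · calc infDist x line[ℝ, a, b] * dist a b
        ≤ dist x (AffineMap.lineMap a b (⟪x - a, b - a⟫ / ‖b - a‖ ^ 2)) * dist a b :=
          mul_le_mul_of_nonneg_right
            (infDist_le_dist_of_mem (AffineMap.lineMap_mem_affineSpan_pair _ _ _)) dist_nonneg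
      _ = √(gramDet (x - a) (b - a)) := by
          rw [hdist, div_mul_cancel₀ _ (by positivity), sub_self]
          norm_num
  · rw [← div_le_iff₀ (dist_pos.2 hab), le_infDist ⟨a, left_mem_affineSpan_pair ℝ a b⟩]
    intro z hz
    obtain ⟨t, rfl⟩ := mem_affineSpan_pair_iff_exists_lineMap_eq.1 hz
    rw [div_le_iff₀ (dist_pos.2 hab), hdist]
    exact Real.sqrt_le_sqrt (le_add_of_nonneg_right (sq_nonneg _))

lemma infDist_affineSpan_pair_mul_dist_rotate (a b c : V) :
    infDist a line[ℝ, b, c] * dist b c = infDist b line[ℝ, c, a] * dist c a := by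
  rw [infDist_affineSpan_pair_mul_dist, infDist_affineSpan_pair_mul_dist, gramDet_sub_sub_rotate]

lemma infDist_lineMap_affineSpan_pair (a b c : V) (t : ℝ) :
    infDist (AffineMap.lineMap a c t) line[ℝ, a, b] = |t| * infDist c line[ℝ, a, b] := by
  rcases eq_or_ne a b with rfl | hab
  · simp [dist_comm]
  refine mul_right_cancel₀ (dist_pos.2 hab).ne' ?_
  rw [mul_assoc, infDist_affineSpan_pair_mul_dist, infDist_affineSpan_pair_mul_dist,
    ← vsub_eq_sub, AffineMap.lineMap_vsub_left, vsub_eq_sub, gramDet_smul_left,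
    Real.sqrt_mul (sq_nonneg t), Real.sqrt_sq_eq_abs]

lemma infDist_midpoint_affineSpan_pair (a b c : V) :
    infDist (midpoint ℝ a c) line[ℝ, a, b] = infDist c line[ℝ, a, b] / 2 := by
  rw [midpoint, infDist_lineMap_affineSpan_pair]
  norm_num
  ring

lemma infDist_affineSpan_pair_pos {a b c : V} (h : ¬Collinear ℝ {a, b, c}) :
    0 < infDist a line[ℝ, b, c] :=
  (AffineSubspace.closed_of_finiteDimensional _).notMem_iff_infDist_pos
    ⟨b, left_mem_affineSpan_pair ℝ b c⟩ |>.1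
      fun ha => h (collinear_insert_of_mem_affineSpan_pair ha)

lemma affineSpan_pair_midpoint_left {a b : V} (hab : a ≠ b) :
    line[ℝ, midpoint ℝ a b, a] = line[ℝ, b, a] := by
  refine affineSpan_pair_eq_of_left_mem_of_ne ?_ ((midpoint_eq_left_iff ℝ).not.2 hab)
  rw [midpoint_comm]
  exact AffineMap.lineMap_mem_affineSpan_pair _ _ _

lemma dist_lt_max_two_mul_dist_midpoint {p q : V} (r : V) (hpq : p ≠ q) :
    dist q r < max (2 * dist q (midpoint ℝ p r)) (dist r p) := by
  have apollonius :=
    EuclideanGeometry.dist_sq_add_dist_sq_eq_two_mul_dist_midpoint_sq_add_half_dist_sq q p r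
  rcases lt_or_ge (dist q r) (dist r p) with h | h
  · exact lt_max_of_lt_right h
  refine lt_max_of_lt_left (lt_of_pow_lt_pow_left₀ 2 (by positivity) ?_)
  have := dist_pos.2 hpq.symm
  rw [dist_comm p r] at apollonius
  nlinarith [pow_le_pow_left₀ dist_nonneg h 2]

lemma min_infDist_lt_infDist {p q r : V} (hpq : p ≠ q) (hpr : p ≠ r)
    (hq : 0 < infDist q line[ℝ, r, p]) :
    min (infDist p line[ℝ, midpoint ℝ p r, q]) (infDist q line[ℝ, r, p])
      < infDist p line[ℝ, q, r] := by
  set u := midpoint ℝ p r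
  set A := infDist q line[ℝ, r, p] * dist r p
  have hA : 0 < A := mul_pos hq (dist_pos.2 hpr.symm)
  have hc : infDist p line[ℝ, q, r] * dist q r = A :=
    infDist_affineSpan_pair_mul_dist_rotate p q r
  have hm : infDist p line[ℝ, u, q] * (2 * dist q u) = A := by
    rw [dist_comm, mul_left_comm, infDist_affineSpan_pair_mul_dist_rotate, Set.pair_comm,
      infDist_midpoint_affineSpan_pair, ← hc, ← infDist_affineSpan_pair_mul_dist_rotate r p q,
      dist_comm p q]
    ring
  have hc_pos : 0 < infDist p line[ℝ, q, r] :=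
    pos_of_mul_pos_left (hc ▸ hA : 0 < infDist p line[ℝ, q, r] * dist q r) dist_nonneg
  rcases lt_max_iff.1 (dist_lt_max_two_mul_dist_midpoint r hpq) with h | h
  · refine (min_le_left _ _).trans_lt
      (lt_of_mul_lt_mul_right ?_ (by positivity : 0 ≤ 2 * dist q u))
    exact (hm.trans hc.symm).trans_lt (mul_lt_mul_of_pos_left h hc_pos)
  · refine (min_le_right _ _).trans_lt (lt_of_mul_lt_mul_right ?_ (dist_nonneg : 0 ≤ dist r p))
    exact hc.symm.trans_lt (mul_lt_mul_of_pos_left h hc_pos)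

end Triangle

theorem stmt_8_general (p q r : EuclideanSpace ℝ (Fin 2))
    (hind : AffineIndependent ℝ ![p, q, r])
    (u : EuclideanSpace ℝ (Fin 2)) (hu : u = midpoint ℝ p r)
    (ε φ : ℝ) (hεφ : ε < φ) (hφ : φ < (1 + ε) / 2) :
    dw ε φ q r p > dw ε φ u p q := by
  have hcol := affineIndependent_iff_not_collinear_set.1 hind
  have hq : 0 < infDist q line[ℝ, r, p] :=
    infDist_affineSpan_pair_pos (by rwa [Set.insert_comm, Set.pair_comm p r] at hcol)
  have hr : 0 < infDist r line[ℝ, p, q] :=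
    infDist_affineSpan_pair_pos (by rwa [Set.pair_comm q r, Set.insert_comm] at hcol)
  have hpr := ne₁₃_of_not_collinear hcol
  have hp := min_infDist_lt_infDist (ne₁₂_of_not_collinear hcol) hpr hq
  have hφ1 : 0 < 1 - φ := by linarith
  subst hu
  simp only [dw, gt_iff_lt, Set.pair_comm q p, affineSpan_pair_midpoint_left hpr,
    infDist_midpoint_affineSpan_pair]
  refine lt_min ?_ (lt_min ?_ ?_)
  · refine (min_le_right _ _).trans_lt ((min_le_right _ _).trans_lt ?_)
    exact mul_lt_mul_of_pos_right (by linarith) hq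
  · refine (min_le_left _ _).trans_lt ?_
    nlinarith [mul_pos hr (by linarith : 0 < (1 + ε) / 2 - φ)]
  · refine (min_le_right _ _).trans_lt ?_
    rw [← mul_min_of_nonneg _ _ hφ1.le]
    exact mul_lt_mul_of_pos_left hp hφ1

theorem stmt_8 (p q r : EuclideanSpace ℝ (Fin 2))
    (hind : AffineIndependent ℝ ![p, q, r])
    (u : EuclideanSpace ℝ (Fin 2)) (hu : u = midpoint ℝ p r)
    (ε φ : ℝ) (hε : 0 < ε) (hεφ : ε < φ) (hφ : φ < (1 + ε) / 2) :
    dw ε φ q r p > dw ε φ u p q :=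
  stmt_8_general p q r hind u hu ε φ hεφ hφ
end

section
/- Let V be a nonempty finite set with n = |V|, let δ > 0, C ≥ 0, and let (τ_i)_{i≥0} be a sequence of functions τ_i : V → ℝ such that: τ_0(p) ≥ 0 for all p; for every i, τ_{i+1}(p) ≥ τ_i(p) for all p and ∑_{p∈V} (τ_{i+1}(p) − τ_i(p)) ≥ δ; and for every i, max_{p∈V} τ_i(p) − min_{p∈V} τ_i(p) ≤ C. Then for every real T ≥ 0 and every natural number k with k ≥ n·(T + C)/δ, we have min_{p∈V} τ_k(p) ≥ T. -/
/-!
Summing the front over `V` gives a quantity that grows by at least `δ` per step, so after `k`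
steps it is at least `k δ`. On the other hand, a front whose spread is at most `C` sums to at most
`n (min + C)`. Once `k δ ≥ n (T + C)` these two bounds force `min ≥ T`.
-/

theorem add_nsmul_le_of_le_sub_succ {M : Type*} [AddCommGroup M] [PartialOrder M]
    [IsOrderedAddMonoid M] {f : ℕ → M} {δ : M} (h : ∀ i, δ ≤ f (i + 1) - f i) (k : ℕ) :
    f 0 + k • δ ≤ f k := by
  induction k with
  | zero => simp
  | succ m ih =>
    calc f 0 + (m + 1) • δ = (f 0 + m • δ) + δ := by rw [succ_nsmul, add_assoc]
      _ ≤ f m + (f (m + 1) - f m) := add_le_add ih (h m)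
      _ = f (m + 1) := add_sub_cancel _ _

theorem Finset.sum_le_card_nsmul_inf'_add {ι M : Type*} [AddCommGroup M] [LinearOrder M]
    [IsOrderedAddMonoid M] {s : Finset ι} (hs : s.Nonempty) {f : ι → M} {C : M}
    (hspread : s.sup' hs f - s.inf' hs f ≤ C) :
    ∑ i ∈ s, f i ≤ s.card • (s.inf' hs f + C) :=
  s.sum_le_card_nsmul f _ fun i hi ↦ by
    have := s.le_sup' f hi
    rw [sub_le_iff_le_add'] at hspread
    exact this.trans hspread

theorem stmt_10_general {α : Type*} (V : Finset α) (hV : V.Nonempty)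
    (δ C : ℝ) (hδ : 0 < δ)
    (τ : ℕ → α → ℝ)
    (h0 : ∀ p ∈ V, 0 ≤ τ 0 p)
    (hprog : ∀ i, δ ≤ ∑ p ∈ V, (τ (i + 1) p - τ i p))
    (hspread : ∀ i, V.sup' hV (τ i) - V.inf' hV (τ i) ≤ C) :
    ∀ T : ℝ, 0 ≤ T → ∀ k : ℕ, (V.card : ℝ) * (T + C) / δ ≤ k →
      T ≤ V.inf' hV (τ k) := by
  intro T _ k hk
  have hcard : (0 : ℝ) < V.card := by exact_mod_cast hV.card_pos
  have hgrowth : (∑ p ∈ V, τ 0 p) + k • δ ≤ ∑ p ∈ V, τ k p :=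
    add_nsmul_le_of_le_sub_succ (f := fun i ↦ ∑ p ∈ V, τ i p)
      (fun i ↦ by simpa only [Finset.sum_sub_distrib] using hprog i) k
  have hbound := V.sum_le_card_nsmul_inf'_add hV (hspread k)
  rw [nsmul_eq_mul] at hgrowth hbound
  have hstart := Finset.sum_nonneg h0
  have hsteps : (V.card : ℝ) * (T + C) ≤ k * δ := (div_le_iff₀ hδ).mp hk
  have : (V.card : ℝ) * (T + C) ≤ V.card * (V.inf' hV (τ k) + C) := by linarith
  linarith [le_of_mul_le_mul_left this hcard]

theorem stmt_10 {α : Type*} [DecidableEq α] (V : Finset α) (hV : V.Nonempty)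
    (δ C : ℝ) (hδ : 0 < δ) (hC : 0 ≤ C)
    (τ : ℕ → α → ℝ)
    (h0 : ∀ p ∈ V, 0 ≤ τ 0 p)
    (hmono : ∀ i, ∀ p ∈ V, τ i p ≤ τ (i + 1) p)
    (hprog : ∀ i, δ ≤ ∑ p ∈ V, (τ (i + 1) p - τ i p))
    (hspread : ∀ i, V.sup' hV (τ i) - V.inf' hV (τ i) ≤ C) :
    ∀ T : ℝ, 0 ≤ T → ∀ k : ℕ, (V.card : ℝ) * (T + C) / δ ≤ k →
      T ≤ V.inf' hV (τ k) :=
  stmt_10_general V hV δ C hδ τ h0 hprog hspread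
end
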